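/- Let L ≥ 1 be an integer, p ≥ 3, and let X be uniform on {±1, …, ±L}, G a centered Gaussian with the same variance σ² = (L+1)(2L+1)/6. Then for all real a, b: E|a + bX|^p ≤ E|a + bG|^p. -/

import Mathlib

/-!
Let `Z` be a standard Gaussian independent of `X`, `σ² = (L + 1)(2L + 1)/6 = E X²` and
`Φ(θ) = E f(X cos θ + σ Z sin θ)`, so that `Φ(0) = E f(X)` and `Φ(π/2) = E f(σ Z)`.
Let `W` and `Ψ` be the Gaussian smoothings of `f'` and `f''` at scale `σ sin θ`, so `W' = Ψ`.
Differentiating under the integral and integrating by parts against the Gaussian density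
(`E[Z g(Z)] = E[g'(Z)]`) gives `Φ'(θ) = sin θ · E[σ² cos θ Ψ(X cos θ) - X W(X cos θ)]`.
Pairing `±j` and writing `W(jr) - W(-jr) = r ∫_{-j}^{j} Ψ(rs) ds` with `r = cos θ`, `Φ' ≥ 0`
reduces to `∑ j ∫_{-j}^{j} ψ ≤ σ² ∑ (ψ(j) + ψ(-j))` for the convex function `ψ(s) = Ψ(rs)`.
That inequality follows by induction on `L` from the trapezoid rule and the monotonicity of
`ψ(s) + ψ(-s)` in `|s|`: `σ²` is exactly the constant for which the induction step balances.
For `f(x) = |a + b x|^p`, `f''` is a nonnegative multiple of `|a + b x|^(p-2)`, convex as `p ≥ 3`.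
-/

open MeasureTheory ProbabilityTheory Real Set Filter
open scoped ENNReal NNReal

lemma hasDerivAt_self_mul_abs_rpow {r : ℝ} (hr : 0 < r) (x : ℝ) :
    HasDerivAt (fun y => y * |y| ^ r) ((r + 1) * |x| ^ r) x := by
  rcases eq_or_ne x 0 with rfl | hx
  · rw [hasDerivAt_iff_tendsto_slope]
    have hslope : slope (fun y => y * |y| ^ r) (0 : ℝ) = fun y => |y| ^ r := by
      ext y
      rcases eq_or_ne y 0 with rfl | hy
      · simp [slope, zero_rpow hr.ne']
      · simp [slope_def_field, hy]
    rw [hslope, abs_zero, zero_rpow hr.ne', mul_zero]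
    have := ((continuous_abs.rpow_const fun _ => Or.inr hr.le).tendsto (0 : ℝ))
    simpa [zero_rpow hr.ne'] using this.mono_left nhdsWithin_le_nhds
  · have h := (hasDerivAt_id' x).mul
      ((hasDerivAt_abs hx).rpow_const (p := r) (Or.inl (abs_ne_zero.2 hx)))
    refine h.congr_deriv ?_
    have hs : (SignType.sign x : ℝ) * x = |x| := by
      rcases hx.lt_or_gt with h | h <;> simp [h, abs_of_neg, abs_of_pos]
    have h2 : |x| ^ (r - 1) * |x| = |x| ^ r := by
      rw [← rpow_add_one (abs_ne_zero.2 hx), sub_add_cancel]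
    linear_combination (r * |x| ^ (r - 1)) * hs + r * h2

lemma convexOn_abs_rpow {q : ℝ} (hq : 1 ≤ q) : ConvexOn ℝ univ fun x : ℝ => |x| ^ q := by
  have himage : (fun x : ℝ => |x|) '' univ = Ici 0 := by
    ext y
    simp only [image_univ, mem_range, mem_Ici]
    exact ⟨fun ⟨x, hx⟩ => hx ▸ abs_nonneg x, fun hy => ⟨y, abs_of_nonneg hy⟩⟩
  refine ConvexOn.comp (g := fun y : ℝ => y ^ q) (f := fun x : ℝ => |x|) ?_ ?_ ?_
  · rw [himage]; exact convexOn_rpow hq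
  · exact convexOn_norm (E := ℝ) convex_univ
  · rw [himage]; exact fun a ha b _ hab => rpow_le_rpow ha hab (by linarith)

def HasExpGrowth (f : ℝ → ℝ) : Prop :=
  ∃ C t : ℝ, ∀ x, |f x| ≤ C * exp (t * |x|)

lemma one_add_abs_le_exp_abs (x : ℝ) : 1 + |x| ≤ exp |x| := by
  linarith [add_one_le_exp |x|]

namespace HasExpGrowth

variable {f : ℝ → ℝ}

lemma exists_bound_of_abs_le (hf : HasExpGrowth f) (A B : ℝ) :
    ∃ C t, ∀ y z, |y| ≤ A + B * |z| → |f y| ≤ C * exp (t * |z|) := by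
  obtain ⟨C, t, h⟩ := hf
  have hC : 0 ≤ C := by simpa using (abs_nonneg _).trans (h 0)
  refine ⟨C * exp (|t| * A), |t| * B, fun y z hy => (h y).trans ?_⟩
  rw [mul_assoc, ← exp_add]
  gcongr
  calc t * |y| ≤ |t| * |y| := mul_le_mul_of_nonneg_right (le_abs_self t) (abs_nonneg y)
    _ ≤ |t| * (A + B * |z|) := mul_le_mul_of_nonneg_left hy (abs_nonneg t)
    _ = _ := by ring

lemma comp_add_mul (hf : HasExpGrowth f) (α δ : ℝ) : HasExpGrowth fun z => f (α + δ * z) := by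
  obtain ⟨C, t, h⟩ := hf.exists_bound_of_abs_le |α| |δ|
  exact ⟨C, t, fun z => h _ z <| (abs_add_le _ _).trans (by rw [abs_mul])⟩

lemma const_mul (hf : HasExpGrowth f) (c : ℝ) : HasExpGrowth fun x => c * f x := by
  obtain ⟨C, t, h⟩ := hf
  exact ⟨|c| * C, t, fun x => by
    rw [abs_mul, mul_assoc]; exact mul_le_mul_of_nonneg_left (h x) (abs_nonneg c)⟩

lemma id_mul (hf : HasExpGrowth f) : HasExpGrowth fun x => x * f x := by
  obtain ⟨C, t, h⟩ := hf.exists_bound_of_abs_le 0 1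
  refine ⟨C, t + 1, fun x => ?_⟩
  have hx : |x| ≤ exp |x| := by linarith [one_add_abs_le_exp_abs x]
  rw [abs_mul, add_mul, one_mul, exp_add, ← mul_assoc, mul_comm |x|]
  exact mul_le_mul (h x x (by simp)) hx (abs_nonneg x)
    ((abs_nonneg _).trans (h x x (by simp)))

lemma abs_rpow {q : ℝ} (hq : 0 ≤ q) : HasExpGrowth fun x => |x| ^ q :=
  ⟨1, q, fun x => by
    rw [abs_of_nonneg (by positivity), one_mul, mul_comm, exp_mul]
    exact rpow_le_rpow (abs_nonneg x) (by linarith [one_add_abs_le_exp_abs x]) hq⟩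

end HasExpGrowth

lemma integrable_exp_mul_abs_gaussianReal (μ : ℝ) (v : ℝ≥0) (t : ℝ) :
    Integrable (fun x => exp (t * |x|)) (gaussianReal μ v) := by
  refine ((integrable_exp_mul_gaussianReal t).add (integrable_exp_mul_gaussianReal (-t))).mono'
    (by fun_prop) (ae_of_all _ fun x => ?_)
  rw [norm_of_nonneg (exp_pos _).le]
  rcases abs_choice x with h | h <;> rw [h]
  · exact le_add_of_nonneg_right (exp_pos _).le
  · rw [mul_neg, ← neg_mul]; exact le_add_of_nonneg_left (exp_pos _).le

lemma HasExpGrowth.integrable_gaussianReal {μ : ℝ} {v : ℝ≥0} {f : ℝ → ℝ} (hf : HasExpGrowth f)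
    (hm : AEStronglyMeasurable f (gaussianReal μ v)) : Integrable f (gaussianReal μ v) :=
  let ⟨C, t, h⟩ := hf
  ((integrable_exp_mul_abs_gaussianReal μ v t).const_mul C).mono' hm (ae_of_all _ h)

lemma hasDerivAt_gaussianPDFReal_zero_one (x : ℝ) :
    HasDerivAt (gaussianPDFReal 0 1) (-x * gaussianPDFReal 0 1 x) x := by
  have h : HasDerivAt (fun y : ℝ => -(y - 0) ^ 2 / (2 * ((1 : ℝ≥0) : ℝ))) (-x) x :=
    ((((hasDerivAt_id' x).sub_const 0).pow 2).neg.div_const _).congr_deriv (by push_cast; ring)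
  exact (h.exp.const_mul _).congr_deriv (by rw [gaussianPDFReal]; ring)

lemma integrable_gaussianReal_zero_one_iff {g : ℝ → ℝ} :
    Integrable g (gaussianReal 0 1) ↔ Integrable fun x => gaussianPDFReal 0 1 x * g x := by
  rw [gaussianReal_of_var_ne_zero _ one_ne_zero,
    integrable_withDensity_iff_integrable_smul' (measurable_gaussianPDF _ _)
      (ae_of_all _ fun _ => gaussianPDF_lt_top)]
  simp only [toReal_gaussianPDF, smul_eq_mul]

lemma measurable_of_hasDerivAt {f f' : ℝ → ℝ} (hf : ∀ x, HasDerivAt f (f' x) x) :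
    Measurable f' := by
  rw [show f' = deriv f from funext fun x => (hf x).deriv.symm]; exact measurable_deriv f

theorem integral_mul_eq_integral_deriv_gaussianReal {g g' : ℝ → ℝ}
    (hd : ∀ x, HasDerivAt g (g' x) x) (hg : HasExpGrowth g) (hg' : HasExpGrowth g') :
    ∫ x, x * g x ∂gaussianReal 0 1 = ∫ x, g' x ∂gaussianReal 0 1 := by
  have hgc : Continuous g := continuous_iff_continuousAt.2 fun x => (hd x).continuousAt
  have hint : ∀ {h : ℝ → ℝ}, HasExpGrowth h → Measurable h →
      Integrable fun x => gaussianPDFReal 0 1 x * h x := fun hh hm =>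
    integrable_gaussianReal_zero_one_iff.1 (hh.integrable_gaussianReal hm.aestronglyMeasurable)
  have ibp := integral_mul_deriv_eq_deriv_mul_of_integrable (u := g) (v := gaussianPDFReal 0 1)
    (u' := g') (v' := fun x => -x * gaussianPDFReal 0 1 x)
    (fun x _ => hd x) (fun x _ => hasDerivAt_gaussianPDFReal_zero_one x)
    (by simpa [Pi.mul_def, mul_comm, mul_left_comm, mul_assoc] using
      (hint hg.id_mul (continuous_id.mul hgc).measurable).neg)
    (by simpa [Pi.mul_def, mul_comm] using hint hg' (measurable_of_hasDerivAt hd))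
    (by simpa [Pi.mul_def, mul_comm] using hint hg hgc.measurable)
  rw [integral_gaussianReal_eq_integral_smul one_ne_zero,
    integral_gaussianReal_eq_integral_smul one_ne_zero]
  simp only [smul_eq_mul]
  have hneg : (fun x => g x * (-x * gaussianPDFReal 0 1 x))
      = fun x => -(gaussianPDFReal 0 1 x * (x * g x)) := by ext x; ring
  rw [hneg, integral_neg, neg_inj] at ibp
  simp_rw [ibp, mul_comm]

noncomputable def gaussSmooth (f : ℝ → ℝ) (δ α : ℝ) : ℝ :=
  ∫ z, f (α + δ * z) ∂gaussianReal 0 1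

lemma gaussSmooth_zero (f : ℝ → ℝ) (α : ℝ) : gaussSmooth f 0 α = f α := by
  simp [gaussSmooth]

lemma HasExpGrowth.integrable_comp_add_mul {f : ℝ → ℝ} (hf : HasExpGrowth f) (hm : Measurable f)
    (α δ : ℝ) : Integrable (fun z => f (α + δ * z)) (gaussianReal 0 1) :=
  (hf.comp_add_mul α δ).integrable_gaussianReal (hm.comp (by fun_prop)).aestronglyMeasurable

lemma add_mul_abs_le_mul_exp_abs {A B : ℝ} (hA : 0 ≤ A) (hB : 0 ≤ B) (z : ℝ) :
    A + B * |z| ≤ (A + B) * exp |z| := by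
  have h := one_add_abs_le_exp_abs z
  nlinarith [abs_nonneg z]

lemma abs_mul_add_mul_mul_le {x c u v : ℝ} (hu : |u| ≤ 1) (hv : |v| ≤ 1) (z : ℝ) :
    |x * u + c * v * z| ≤ |x| + |c| * |z| := by
  calc |x * u + c * v * z| ≤ |x| * |u| + |c| * |v| * |z| := by
        simpa only [abs_mul] using abs_add_le (x * u) (c * v * z)
    _ ≤ |x| * 1 + |c| * 1 * |z| := by gcongr
    _ = |x| + |c| * |z| := by ring

section Smoothing

variable {f f' : ℝ → ℝ}

lemma hasDerivAt_gaussSmooth (hf : ∀ x, HasDerivAt f (f' x) x) (hfg : HasExpGrowth f)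
    (hf'g : HasExpGrowth f') (δ α₀ : ℝ) :
    HasDerivAt (gaussSmooth f δ) (gaussSmooth f' δ α₀) α₀ := by
  have hfc : Continuous f := continuous_iff_continuousAt.2 fun x => (hf x).continuousAt
  obtain ⟨C, t, hC⟩ := hf'g.exists_bound_of_abs_le (|α₀| + 1) |δ|
  refine (hasDerivAt_integral_of_dominated_loc_of_deriv_le (μ := gaussianReal 0 1)
    (F' := fun α z => f' (α + δ * z)) (bound := fun z => C * exp (t * |z|))
    (Metric.ball_mem_nhds α₀ one_pos) (Eventually.of_forall fun α => by fun_prop)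
    (hfg.integrable_comp_add_mul hfc.measurable α₀ δ)
    ((measurable_of_hasDerivAt hf).comp (by fun_prop)).aestronglyMeasurable
    (ae_of_all _ fun z α hα => ?_)
    ((integrable_exp_mul_abs_gaussianReal 0 1 t).const_mul C)
    (ae_of_all _ fun z α _ => ?_)).2
  · refine hC _ z ((abs_add_le _ _).trans ?_)
    rw [abs_mul]
    have := abs_sub_abs_le_abs_sub α α₀
    rw [Metric.mem_ball, dist_eq_norm, norm_eq_abs] at hα
    linarith
  · exact (hf (α + δ * z)).comp_add_const α (δ * z)

lemma convexOn_gaussSmooth (hf : ConvexOn ℝ univ f) (hfg : HasExpGrowth f) (δ : ℝ) :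
    ConvexOn ℝ univ (gaussSmooth f δ) := by
  have hint := hfg.integrable_comp_add_mul
    (hf.continuousOn isOpen_univ |> continuousOn_univ.1).measurable
  refine ⟨convex_univ, fun x _ y _ a b ha hb hab => ?_⟩
  calc gaussSmooth f δ (a • x + b • y)
      ≤ ∫ z, (a * f (x + δ * z) + b * f (y + δ * z)) ∂gaussianReal 0 1 := by
        refine integral_mono (hint _ δ) (((hint x δ).const_mul a).add ((hint y δ).const_mul b))
          fun z => ?_
        have := hf.2 (mem_univ (x + δ * z)) (mem_univ (y + δ * z)) ha hb hab
        simp only [smul_eq_mul] at this ⊢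
        convert this using 2
        linear_combination (δ * z) * hab.symm
    _ = a • gaussSmooth f δ x + b • gaussSmooth f δ y := by
        rw [integral_add ((hint x δ).const_mul a) ((hint y δ).const_mul b),
          integral_const_mul, integral_const_mul]
        rfl

lemma integral_mul_comp_add_mul_eq_mul_gaussSmooth (hf : ∀ x, HasDerivAt f (f' x) x)
    (hfg : HasExpGrowth f) (hf'g : HasExpGrowth f') (α δ : ℝ) :
    ∫ z, z * f (α + δ * z) ∂gaussianReal 0 1 = δ * gaussSmooth f' δ α := by
  rw [integral_mul_eq_integral_deriv_gaussianReal (g := fun z => f (α + δ * z))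
    (g' := fun z => δ * f' (α + δ * z))
    (fun z => ((hf (α + δ * z)).comp z (((hasDerivAt_id' z).const_mul δ).const_add α)
      |>.congr_deriv (by ring)))
    (hfg.comp_add_mul α δ) (HasExpGrowth.const_mul (hf'g.comp_add_mul α δ) δ), gaussSmooth,
    integral_const_mul]

lemma integral_rotation_deriv_eq {f'' : ℝ → ℝ} (hf' : ∀ x, HasDerivAt f' (f'' x) x)
    (hf'g : HasExpGrowth f') (hf''g : HasExpGrowth f'') (c x θ : ℝ) :
    ∫ z, f' (x * cos θ + c * sin θ * z) * (-(x * sin θ) + c * cos θ * z) ∂gaussianReal 0 1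
      = sin θ * (c ^ 2 * cos θ * gaussSmooth f'' (c * sin θ) (x * cos θ)
        - x * gaussSmooth f' (c * sin θ) (x * cos θ)) := by
  have hf'c : Continuous f' := continuous_iff_continuousAt.2 fun x => (hf' x).continuousAt
  have hint := hf'g.integrable_comp_add_mul hf'c.measurable (x * cos θ) (c * sin θ)
  have hint' := (hf'g.comp_add_mul (x * cos θ) (c * sin θ)).id_mul.integrable_gaussianReal
    (μ := 0) (v := 1) (by fun_prop)
  have hsplit : (fun z => f' (x * cos θ + c * sin θ * z) * (-(x * sin θ) + c * cos θ * z))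
      = fun z => -(x * sin θ) * f' (x * cos θ + c * sin θ * z)
        + c * cos θ * (z * f' (x * cos θ + c * sin θ * z)) := by
    ext z; ring
  rw [hsplit, integral_add (hint.const_mul _) (hint'.const_mul _), integral_const_mul,
    integral_const_mul, integral_mul_comp_add_mul_eq_mul_gaussSmooth hf' hf'g hf''g]
  unfold gaussSmooth
  ring

lemma hasDerivAt_gaussSmooth_rotation {f'' : ℝ → ℝ} (hf : ∀ x, HasDerivAt f (f' x) x)
    (hf' : ∀ x, HasDerivAt f' (f'' x) x) (hfg : HasExpGrowth f) (hf'g : HasExpGrowth f')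
    (hf''g : HasExpGrowth f'') (c x θ₀ : ℝ) :
    HasDerivAt (fun θ => gaussSmooth f (c * sin θ) (x * cos θ))
      (sin θ₀ * (c ^ 2 * cos θ₀ * gaussSmooth f'' (c * sin θ₀) (x * cos θ₀)
        - x * gaussSmooth f' (c * sin θ₀) (x * cos θ₀))) θ₀ := by
  have hfc : Continuous f := continuous_iff_continuousAt.2 fun x => (hf x).continuousAt
  have hf'c : Continuous f' := continuous_iff_continuousAt.2 fun x => (hf' x).continuousAt
  obtain ⟨C, t, hC⟩ := hf'g.exists_bound_of_abs_le |x| |c|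
  rw [← integral_rotation_deriv_eq hf' hf'g hf''g]
  refine (hasDerivAt_integral_of_dominated_loc_of_deriv_le (μ := gaussianReal 0 1)
    (F := fun θ z => f (x * cos θ + c * sin θ * z))
    (F' := fun θ z => f' (x * cos θ + c * sin θ * z) * (-(x * sin θ) + c * cos θ * z))
    (x₀ := θ₀) (bound := fun z => C * (|x| + |c|) * exp ((t + 1) * |z|)) univ_mem
    (Eventually.of_forall fun θ => by fun_prop)
    (hfg.integrable_comp_add_mul hfc.measurable _ _) (by fun_prop)
    (ae_of_all _ fun z θ _ => ?_)
    ((integrable_exp_mul_abs_gaussianReal 0 1 _).const_mul _)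
    (ae_of_all _ fun z θ _ => ?_)).2
  · have hf'y := hC _ z (abs_mul_add_mul_mul_le (abs_cos_le_one θ) (abs_sin_le_one θ) z)
    have hlin : |-(x * sin θ) + c * cos θ * z| ≤ |x| + |c| * |z| := by
      simpa only [mul_neg] using
        abs_mul_add_mul_mul_le (x := x) (u := -sin θ) (by simpa using abs_sin_le_one θ)
          (abs_cos_le_one θ) z
    rw [norm_mul, norm_eq_abs, norm_eq_abs, add_mul, exp_add, one_mul]
    calc |f' _| * |-(x * sin θ) + c * cos θ * z|
        ≤ C * exp (t * |z|) * ((|x| + |c|) * exp |z|) :=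
          mul_le_mul hf'y
            (hlin.trans (add_mul_abs_le_mul_exp_abs (abs_nonneg x) (abs_nonneg c) z))
            (abs_nonneg _) ((abs_nonneg _).trans hf'y)
      _ = _ := by ring
  · exact ((hf _).comp θ (((hasDerivAt_cos θ).const_mul x).fun_add
      (((hasDerivAt_sin θ).const_mul c).mul_const z))).congr_deriv (by ring)

lemma hasDerivAt_sum_gaussSmooth_rotation {f'' : ℝ → ℝ} (hf : ∀ x, HasDerivAt f (f' x) x)
    (hf' : ∀ x, HasDerivAt f' (f'' x) x) (hfg : HasExpGrowth f) (hf'g : HasExpGrowth f')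
    (hf''g : HasExpGrowth f'') (c : ℝ) (L : ℕ) (θ : ℝ) :
    HasDerivAt (fun θ => ∑ j ∈ Finset.Icc 1 L,
        (gaussSmooth f (c * sin θ) (j * cos θ) + gaussSmooth f (c * sin θ) (-j * cos θ)))
      (sin θ * (c ^ 2 * cos θ * ∑ j ∈ Finset.Icc 1 L,
          (gaussSmooth f'' (c * sin θ) (j * cos θ) + gaussSmooth f'' (c * sin θ) (-j * cos θ))
        - ∑ j ∈ Finset.Icc 1 L, (j : ℝ) *
          (gaussSmooth f' (c * sin θ) (j * cos θ) - gaussSmooth f' (c * sin θ) (-j * cos θ))))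
      θ := by
  refine (HasDerivAt.fun_sum (u := Finset.Icc 1 L) fun j _ =>
    (hasDerivAt_gaussSmooth_rotation hf hf' hfg hf'g hf''g c j θ).fun_add
    (hasDerivAt_gaussSmooth_rotation hf hf' hfg hf'g hf''g c (-j) θ)).congr_deriv ?_
  simp only [Finset.mul_sum, ← Finset.sum_sub_distrib]
  exact Finset.sum_congr rfl fun j _ => by ring

end Smoothing

section Discrete

variable {ψ : ℝ → ℝ}

lemma ConvexOn.comp_add_mul (hψ : ConvexOn ℝ univ ψ) (α δ : ℝ) :
    ConvexOn ℝ univ fun x => ψ (α + δ * x) := by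
  refine ⟨convex_univ, fun x _ y _ a b ha hb hab => ?_⟩
  have := hψ.2 (mem_univ (α + δ * x)) (mem_univ (α + δ * y)) ha hb hab
  simp only [smul_eq_mul] at this ⊢
  rwa [show α + δ * (a * x + b * y) = a * (α + δ * x) + b * (α + δ * y) by
    linear_combination α * hab.symm]

lemma ConvexOn.add_comp_neg_le (hψ : ConvexOn ℝ univ ψ) {s t : ℝ} (hst : |s| ≤ t) :
    ψ s + ψ (-s) ≤ ψ t + ψ (-t) := by
  have hφ : ConvexOn ℝ univ fun s => ψ s + ψ (-s) :=
    hψ.add (by simpa using hψ.comp_add_mul 0 (-1))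
  have hseg : s ∈ segment ℝ (-t) t := by
    rw [segment_eq_Icc (by linarith [abs_nonneg s])]
    exact abs_le.1 hst
  simpa [add_comm] using hφ.le_on_segment (mem_univ _) (mem_univ _) hseg

lemma ConvexOn.intervalIntegral_le_trapezoid (hψ : ConvexOn ℝ univ ψ) (u : ℝ) :
    ∫ s in u..u + 1, ψ s ≤ (ψ u + ψ (u + 1)) / 2 := by
  have hψc : Continuous ψ := continuousOn_univ.1 (hψ.continuousOn isOpen_univ)
  have hchord : ∀ s ∈ Icc u (u + 1), ψ s ≤ (u + 1 - s) * ψ u + (s - u) * ψ (u + 1) := by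
    rintro s ⟨hs₁, hs₂⟩
    have := hψ.2 (mem_univ u) (mem_univ (u + 1)) (by linarith : 0 ≤ u + 1 - s)
      (by linarith : 0 ≤ s - u) (by ring)
    simp only [smul_eq_mul] at this
    calc ψ s = ψ ((u + 1 - s) * u + (s - u) * (u + 1)) := by ring_nf
      _ ≤ _ := this
  calc ∫ s in u..u + 1, ψ s
      ≤ ∫ s in u..u + 1, ((u + 1 - s) * ψ u + (s - u) * ψ (u + 1)) :=
        intervalIntegral.integral_mono_on (by linarith) (hψc.intervalIntegrable _ _)
          (Continuous.intervalIntegrable (by fun_prop) _ _) hchord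
    _ = (ψ u + ψ (u + 1)) / 2 := by
        rw [intervalIntegral.integral_add (Continuous.intervalIntegrable (by fun_prop) _ _)
          (Continuous.intervalIntegrable (by fun_prop) _ _), intervalIntegral.integral_mul_const,
          intervalIntegral.integral_mul_const]
        simp [intervalIntegral.integral_comp_sub_left (fun x => x)]
        ring

lemma ConvexOn.intervalIntegral_le_composite_trapezoid (hψ : ConvexOn ℝ univ ψ) (n : ℕ) :
    ∫ s in -(n : ℝ)..n, ψ s
      ≤ ψ 0 + ∑ j ∈ Finset.Icc 1 n, (ψ j + ψ (-j)) - (ψ n + ψ (-n)) / 2 := by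
  have hψi : ∀ u v, IntervalIntegrable ψ volume u v :=
    (continuousOn_univ.1 (hψ.continuousOn isOpen_univ)).intervalIntegrable
  induction n with
  | zero => simp
  | succ n ih =>
    have hright := hψ.intervalIntegral_le_trapezoid n
    have hleft := hψ.intervalIntegral_le_trapezoid (-n - 1)
    rw [← intervalIntegral.integral_add_adjacent_intervals (hψi _ (-n)) (hψi (-n) _),
      ← intervalIntegral.integral_add_adjacent_intervals (hψi (-n) n) (hψi n _),
      Finset.sum_Icc_succ_top (by omega)]
    push_cast at hleft ⊢
    rw [show -((n : ℝ) + 1) = -n - 1 by ring]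
    rw [show (-n - 1 : ℝ) + 1 = -n by ring] at hleft
    linarith

lemma ConvexOn.sum_mul_intervalIntegral_le (hψ : ConvexOn ℝ univ ψ) (L : ℕ) :
    ∑ j ∈ Finset.Icc 1 L, (j : ℝ) * ∫ s in -(j : ℝ)..j, ψ s
      ≤ ((L : ℝ) + 1) * (2 * L + 1) / 6 * ∑ j ∈ Finset.Icc 1 L, (ψ j + ψ (-j)) := by
  induction L with
  | zero => simp
  | succ L ih =>
    have hint := hψ.intervalIntegral_le_composite_trapezoid (L + 1)
    have hmono : ∑ j ∈ Finset.Icc 1 L, (ψ j + ψ (-j))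
        ≤ ∑ j ∈ Finset.Icc 1 L, (ψ (L + 1 : ℕ) + ψ (-(L + 1 : ℕ))) :=
      Finset.sum_le_sum fun j hj => hψ.add_comp_neg_le <| by
        rw [abs_of_nonneg j.cast_nonneg]; exact_mod_cast (Finset.mem_Icc.1 hj).2.trans L.le_succ
    have hzero := hψ.add_comp_neg_le (s := 0) (t := (L + 1 : ℕ)) (by rw [abs_zero]; positivity)
    rw [Finset.sum_const, Nat.card_Icc, nsmul_eq_mul] at hmono
    rw [Finset.sum_Icc_succ_top (by omega), Finset.sum_Icc_succ_top (by omega)] at *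
    push_cast at *
    rw [neg_zero] at hzero
    linarith [mul_le_mul_of_nonneg_left hint (by linarith : (0 : ℝ) ≤ L + 1),
      mul_le_mul_of_nonneg_left hmono (by linarith : (0 : ℝ) ≤ 2 * L + 1),
      mul_le_mul_of_nonneg_left hzero (by linarith : (0 : ℝ) ≤ L + 1)]

end Discrete

lemma sum_mul_sub_le_of_hasDerivAt {W Ψ : ℝ → ℝ} (hW : ∀ x, HasDerivAt W (Ψ x) x)
    (hΨ : ConvexOn ℝ univ Ψ) (L : ℕ) {r : ℝ} (hr : 0 ≤ r) :
    ∑ j ∈ Finset.Icc 1 L, (j : ℝ) * (W (j * r) - W (-j * r))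
      ≤ ((L : ℝ) + 1) * (2 * L + 1) / 6 * r * ∑ j ∈ Finset.Icc 1 L, (Ψ (j * r) + Ψ (-j * r)) := by
  have hψ : ConvexOn ℝ univ fun s => Ψ (s * r) := by
    simpa [mul_comm] using hΨ.comp_add_mul 0 r
  have hΨc : Continuous Ψ := continuousOn_univ.1 (hΨ.continuousOn isOpen_univ)
  have hFTC : ∀ j : ℕ, W (j * r) - W (-j * r) = r * ∫ s in -(j : ℝ)..j, Ψ (s * r) := by
    intro j
    rw [← intervalIntegral.integral_const_mul, intervalIntegral.integral_eq_sub_of_hasDerivAt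
      (f := fun s => W (s * r)) (f' := fun s => r * Ψ (s * r))
      (fun s _ => ((hW _).comp s ((hasDerivAt_id' s).mul_const r)).congr_deriv (by ring))
      (Continuous.intervalIntegrable (by fun_prop) _ _)]
  simp_rw [hFTC, mul_left_comm _ r, ← Finset.mul_sum]
  rw [mul_comm _ r, mul_assoc]
  exact mul_le_mul_of_nonneg_left (hψ.sum_mul_intervalIntegral_le L) hr

lemma integral_gaussianReal_eq_gaussSmooth {f : ℝ → ℝ} (hf : Continuous f) (v : ℝ≥0) :
    ∫ x, f x ∂gaussianReal 0 v = gaussSmooth f √(v : ℝ) 0 := by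
  have hmap : (gaussianReal 0 1).map (fun z => √(v : ℝ) * z) = gaussianReal 0 v := by
    rw [gaussianReal_map_const_mul, mul_zero, mul_one]
    congr 1
    exact NNReal.eq (sq_sqrt v.2)
  rw [← hmap, integral_map (by fun_prop) hf.aestronglyMeasurable, gaussSmooth]
  simp

theorem sum_le_integral_gaussianReal {f f' f'' : ℝ → ℝ} (hf : ∀ x, HasDerivAt f (f' x) x)
    (hf' : ∀ x, HasDerivAt f' (f'' x) x) (hf''c : ConvexOn ℝ univ f'') (hfg : HasExpGrowth f)
    (hf'g : HasExpGrowth f') (hf''g : HasExpGrowth f'') {L : ℕ} (hL : 1 ≤ L) :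
    (2 * (L : ℝ))⁻¹ * ∑ j ∈ Finset.Icc 1 L, (f j + f (-j))
      ≤ ∫ x, f x ∂gaussianReal 0 (((L : ℝ≥0) + 1) * (2 * (L : ℝ≥0) + 1) / 6) := by
  set v : ℝ≥0 := ((L : ℝ≥0) + 1) * (2 * (L : ℝ≥0) + 1) / 6
  set σ := √(v : ℝ) with hσdef
  have hσ : σ ^ 2 = ((L : ℝ) + 1) * (2 * L + 1) / 6 := by
    rw [hσdef, sq_sqrt v.coe_nonneg]
    simp [v]
  set Φ : ℝ → ℝ := fun θ => ∑ j ∈ Finset.Icc 1 L,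
    (gaussSmooth f (σ * sin θ) (j * cos θ) + gaussSmooth f (σ * sin θ) (-j * cos θ))
  have hΦ := hasDerivAt_sum_gaussSmooth_rotation hf hf' hfg hf'g hf''g σ L
  have hmono : MonotoneOn Φ (Icc 0 (π / 2)) := by
    refine monotoneOn_of_deriv_nonneg (convex_Icc _ _)
      (continuous_iff_continuousAt.2 fun θ => (hΦ θ).continuousAt).continuousOn
      (fun θ _ => (hΦ θ).differentiableAt.differentiableWithinAt) fun θ hθ => ?_
    rw [interior_Icc] at hθ
    rw [(hΦ θ).deriv, hσ]
    have hcos : 0 ≤ cos θ := cos_nonneg_of_mem_Icc ⟨by linarith [hθ.1, pi_pos], hθ.2.le⟩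
    have hsin : 0 ≤ sin θ := sin_nonneg_of_nonneg_of_le_pi hθ.1.le (by linarith [hθ.2, pi_pos])
    exact mul_nonneg hsin <| sub_nonneg.2 <| sum_mul_sub_le_of_hasDerivAt
      (hasDerivAt_gaussSmooth hf' hf'g hf''g _) (convexOn_gaussSmooth hf''c hf''g _) L hcos
  have hfc : Continuous f := continuous_iff_continuousAt.2 fun x => (hf x).continuousAt
  have hL0 : (L : ℝ) ≠ 0 := by exact_mod_cast (by omega : L ≠ 0)
  calc (2 * (L : ℝ))⁻¹ * ∑ j ∈ Finset.Icc 1 L, (f j + f (-j)) = (2 * (L : ℝ))⁻¹ * Φ 0 := by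
        simp [Φ, gaussSmooth_zero]
    _ ≤ (2 * (L : ℝ))⁻¹ * Φ (π / 2) := by
        gcongr
        exact hmono (left_mem_Icc.2 (by positivity)) (right_mem_Icc.2 (by positivity))
          (by positivity)
    _ = _ := by
        rw [integral_gaussianReal_eq_gaussSmooth hfc]
        simp [Φ]
        field_simp
        ring

lemma integral_smul_sum_dirac (L : ℕ) (f : ℝ → ℝ) :
    ∫ x, f x ∂((2 * (L : ℝ≥0∞))⁻¹ •
        ∑ j ∈ Finset.Icc 1 L, (Measure.dirac (j : ℝ) + Measure.dirac (-(j : ℝ))))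
      = (2 * (L : ℝ))⁻¹ * ∑ j ∈ Finset.Icc 1 L, (f j + f (-j)) := by
  have hint : ∀ x : ℝ, Integrable f (Measure.dirac x) := fun _ => integrable_dirac enorm_lt_top
  rw [integral_smul_measure, integral_finsetSum_measure fun j _ =>
    integrable_add_measure.2 ⟨hint _, hint _⟩]
  simp [integral_add_measure (hint _) (hint _)]

theorem stmt_12 (L : ℕ) (hL : 1 ≤ L) (p : ℝ) (hp : 3 ≤ p) (a b : ℝ) :
    ∫ x, |a + b * x| ^ p
        ∂((2 * (L : ℝ≥0∞))⁻¹ •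
          ∑ j ∈ Finset.Icc 1 L, (Measure.dirac ((j : ℝ)) + Measure.dirac (-(j : ℝ))))
      ≤ ∫ x, |a + b * x| ^ p
        ∂(gaussianReal 0 (((L : ℝ≥0) + 1) * (2 * (L : ℝ≥0) + 1) / 6)) := by
  have haff : ∀ x, HasDerivAt (fun x => a + b * x) b x := fun x =>
    ((hasDerivAt_id' x).const_mul b).const_add a |>.congr_deriv (mul_one b)
  rw [integral_smul_sum_dirac]
  refine sum_le_integral_gaussianReal
    (f' := fun x => p * b * ((a + b * x) * |a + b * x| ^ (p - 2)))
    (f'' := fun x => p * (p - 1) * b ^ 2 * |a + b * x| ^ (p - 2))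
    (fun x => ((hasDerivAt_abs_rpow _ (by linarith)).comp x (haff x)).congr_deriv (by ring))
    (fun x => (((hasDerivAt_self_mul_abs_rpow (r := p - 2) (by linarith) _).comp x
      (haff x)).const_mul (p * b)).congr_deriv (by ring))
    ?_ ((HasExpGrowth.abs_rpow (by linarith)).comp_add_mul a b)
    (((HasExpGrowth.abs_rpow (by linarith)).id_mul.comp_add_mul a b).const_mul _)
    (((HasExpGrowth.abs_rpow (by linarith)).comp_add_mul a b).const_mul _) hL
  simpa only [smul_eq_mul] using
    ((convexOn_abs_rpow (by linarith : 1 ≤ p - 2)).comp_add_mul a b).smul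
      (c := p * (p - 1) * b ^ 2) (mul_nonneg (mul_nonneg (by linarith) (by linarith)) (sq_nonneg b))
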